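/- arXiv:1204.4377 — 5 statements merged into one kernel-verified Lean document; each statement's English description precedes it below -/
import Mathlib

section
/- For any multiplicative characters A and B of F_q, the sum over all multiplicative characters χ of J(Aχ, Bχ̄)·χ(-1) equals 0. -/
noncomputable instance {F : Type*} [Field F] [Fintype F] : Fintype (MulChar F ℂ) :=
  Fintype.ofFinite _

/-!
After swapping the two sums, the summand for a fixed `t` factors as
`A t * B (1 - t) * χ (t / (t - 1))`, and `t / (t - 1)` is never `1` (at `t = 1` division by zero gives `0`),
so the sum over `χ` vanishes by orthogonality of characters.
-/

namespace MulChar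

theorem sum_apply_eq_zero_of_ne_one {M R : Type*} [CommMonoid M] [Finite M] [CommRing R]
    [IsDomain R] [HasEnoughRootsOfUnity R (Monoid.exponent Mˣ)] [Fintype (MulChar M R)]
    {a : M} (ha : a ≠ 1) : ∑ χ : MulChar M R, χ a = 0 := by
  obtain ⟨ψ, hψ⟩ := exists_apply_ne_one_of_hasEnoughRootsOfUnity M R ha
  refine eq_zero_of_mul_eq_self_left hψ ?_
  simp only [Finset.mul_sum, ← mul_apply]
  exact Fintype.sum_bijective _ (Group.mulLeft_bijective ψ) _ _ fun _ ↦ rfl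

theorem mul_apply_mul_mul_inv_apply {F R : Type*} [Field F] [CommRing R]
    (A B χ : MulChar F R) (s t : F) :
    (A * χ) s * (B * χ⁻¹) t = A s * B t * χ (s / t) := by
  rw [mul_apply, mul_apply, inv_apply', div_eq_mul_inv, map_mul]
  ring

end MulChar

theorem div_sub_one_ne_one {F : Type*} [Field F] (t : F) : t / (t - 1) ≠ 1 := by
  rcases eq_or_ne t 1 with rfl | ht
  · simp
  · rw [Ne, div_eq_one_iff_eq (sub_ne_zero.mpr ht)]
    exact fun h ↦ one_ne_zero (by linear_combination h : (1 : F) = 0)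

theorem sum_jacobiSum_eq_zero {F : Type*} [Field F] [Fintype F] (A B : MulChar F ℂ) :
    ∑ χ : MulChar F ℂ, jacobiSum (A * χ) (B * χ⁻¹) * χ (-1) = 0 := by
  simp only [jacobiSum, Finset.sum_mul]
  rw [Finset.sum_comm]
  refine Finset.sum_eq_zero fun t _ ↦ ?_
  have summand (χ : MulChar F ℂ) :
      (A * χ) t * (B * χ⁻¹) (1 - t) * χ (-1) = A t * B (1 - t) * χ (t / (t - 1)) := by
    rw [MulChar.mul_apply_mul_mul_inv_apply, mul_assoc, ← map_mul, mul_neg_one, ← div_neg, neg_sub]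
  simp only [summand, ← Finset.mul_sum, MulChar.sum_apply_eq_zero_of_ne_one (div_sub_one_ne_one t),
    mul_zero]
end

section
/- (Helversen-Pasotto) For multiplicative characters A, B, C, D of F_q: (1/(q-1))·Σ_χ g(Aχ)g(Bχ)g(Cχ̄)g(Dχ̄) = g(AC)g(AD)g(BC)g(BD)/g(ABCD) + q(q-1)·AB(-1)·δ(ABCD), where the sum is over all multiplicative characters χ and δ(χ) is 1 if χ is trivial and 0 otherwise. -/
open Finset AddChar
open scoped Classical

section Orthogonality

variable {M R : Type*} [CommMonoid M] [Finite M] [CommRing R] [IsDomain R]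
  [HasEnoughRootsOfUnity R (Monoid.exponent Mˣ)] [Fintype (MulChar M R)]

theorem MulChar.sum_apply_eq_ite (a : M) :
    ∑ χ : MulChar M R, χ a = if a = 1 then (Nat.card Mˣ : R) else 0 := by
  split_ifs with ha
  · simp [ha, ← card_eq_card_units_of_hasEnoughRootsOfUnity M R, Nat.card_eq_fintype_card]
  · obtain ⟨χ, hχ⟩ := exists_apply_ne_one_of_hasEnoughRootsOfUnity M R ha
    refine eq_zero_of_mul_eq_self_left hχ ?_
    simp only [mul_sum, ← MulChar.mul_apply]
    exact Fintype.sum_bijective _ (Group.mulLeft_bijective χ) _ _ fun _ ↦ rfl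

end Orthogonality

section NegOne

variable {F R : Type*} [Field F] [CommRing R]

theorem MulChar.inv_apply_neg_one (χ : MulChar F R) : χ⁻¹ (-1) = χ (-1) := by
  rw [MulChar.inv_apply', inv_neg_one]

theorem MulChar.apply_neg_one_mul_self (χ : MulChar F R) : χ (-1) * χ (-1) = 1 := by
  rw [← map_mul, neg_mul_neg, one_mul, map_one]

theorem MulChar.apply_neg_one_mul_apply_neg_one_of_mul_eq_one {A B C D : MulChar F R}
    (h : A * B * C * D = 1) : (A * C) (-1) * (A * D) (-1) = (A * B) (-1) := by
  have h' := congrArg (· (-1)) h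
  simp only [MulChar.mul_apply, MulChar.one_apply isUnit_one.neg] at h' ⊢
  linear_combination -(C (-1) * D (-1) * A (-1) * A (-1)) * B.apply_neg_one_mul_self +
    A (-1) * B (-1) * h'

end NegOne

section FiniteField

variable {F R : Type*} [Field F] [Fintype F] [CommRing R]

theorem natCard_units_cast : (Nat.card Fˣ : R) = Fintype.card F - 1 := by
  rw [Nat.card_eq_fintype_card, Fintype.card_units, Nat.cast_sub Fintype.card_pos, Nat.cast_one]

section GaussSum

variable (θ : AddChar F R)

theorem gaussSum_mulShift_of_ne_zero (ρ : MulChar F R) {c : F} (hc : c ≠ 0) :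
    gaussSum ρ (θ.mulShift c) = ρ⁻¹ c * gaussSum ρ θ :=
  gaussSum_mulShift_eq ρ θ (Units.mk0 c hc)

theorem gaussSum_mul_gaussSum_eq_sum_mulShift (φ ψ : MulChar F R) :
    gaussSum φ θ * gaussSum ψ θ = ∑ t, φ t * gaussSum (φ * ψ) (θ.mulShift (1 + t)) := by
  rw [gaussSum, gaussSum, sum_mul_sum, sum_comm]
  simp only [gaussSum, mul_sum, mulShift_apply]
  conv_rhs => rw [sum_comm]
  refine sum_congr rfl fun z _ ↦ ?_
  rcases eq_or_ne z 0 with rfl | hz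
  · simp [MulChar.map_zero]
  rw [← (mulRight_bijective₀ z hz).sum_comp]
  refine sum_congr rfl fun t _ ↦ ?_
  rw [map_mul, MulChar.mul_apply, add_mul, one_mul, map_add_eq_mul]
  ring

variable [IsDomain R]

theorem gaussSum_mulShift_zero (ρ : MulChar F R) :
    gaussSum ρ (θ.mulShift 0) = if ρ = 1 then (Fintype.card F : R) - 1 else 0 := by
  split_ifs with hρ
  · rw [hρ, mulShift_zero, gaussSum_one_one, natCard_units_cast]
  · rw [mulShift_zero, gaussSum_one_right hρ]

theorem gaussSum_mul_gaussSum_eq_add (φ ψ : MulChar F R) :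
    gaussSum φ θ * gaussSum ψ θ =
      gaussSum (φ * ψ) θ * ∑ t, φ t * (φ * ψ)⁻¹ (1 + t) +
        φ (-1) * if φ * ψ = 1 then (Fintype.card F : R) - 1 else 0 := by
  have hterm (t : F) : φ t * gaussSum (φ * ψ) (θ.mulShift (1 + t)) =
      gaussSum (φ * ψ) θ * (φ t * (φ * ψ)⁻¹ (1 + t)) +
        if t = -1 then φ (-1) * if φ * ψ = 1 then (Fintype.card F : R) - 1 else 0 else 0 := by
    by_cases ht : t = -1
    · rw [if_pos ht, ht, add_neg_cancel, gaussSum_mulShift_zero, MulChar.map_zero]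
      ring
    · have h : 1 + t ≠ 0 := fun h ↦ ht (eq_neg_of_add_eq_zero_right h)
      rw [if_neg ht, gaussSum_mulShift_of_ne_zero θ _ h]
      ring
  rw [gaussSum_mul_gaussSum_eq_sum_mulShift, sum_congr rfl fun t _ ↦ hterm t, sum_add_distrib,
    sum_ite_eq', if_pos (mem_univ _), mul_sum]

theorem sum_mul_gaussSum_mulShift_mul_gaussSum_mulShift (A B C D : MulChar F R) :
    ∑ t, A t * B t⁻¹ * gaussSum (A * C) (θ.mulShift (1 + t)) *
        gaussSum (B * D) (θ.mulShift (1 + t⁻¹)) =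
      gaussSum (A * C) θ * gaussSum (B * D) θ * ∑ t, (A * D) t * (A * B * C * D)⁻¹ (1 + t) +
        (A * B) (-1) * ((if A * C = 1 then (Fintype.card F : R) - 1 else 0) *
          if B * D = 1 then (Fintype.card F : R) - 1 else 0) := by
  have hterm (t : F) : A t * B t⁻¹ * gaussSum (A * C) (θ.mulShift (1 + t)) *
        gaussSum (B * D) (θ.mulShift (1 + t⁻¹)) =
      gaussSum (A * C) θ * gaussSum (B * D) θ * ((A * D) t * (A * B * C * D)⁻¹ (1 + t)) +
        if t = -1 then (A * B) (-1) * ((if A * C = 1 then (Fintype.card F : R) - 1 else 0) *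
          if B * D = 1 then (Fintype.card F : R) - 1 else 0) else 0 := by
    by_cases ht : t = -1
    · rw [if_pos ht, ht, inv_neg_one, add_neg_cancel, gaussSum_mulShift_zero,
        gaussSum_mulShift_zero, MulChar.map_zero]
      simp only [MulChar.mul_apply]
      ring
    rcases eq_or_ne t 0 with rfl | ht0
    · simp [MulChar.map_zero]
    have h1 : 1 + t ≠ 0 := fun h ↦ ht (eq_neg_of_add_eq_zero_right h)
    have h2 : 1 + t⁻¹ = (1 + t) * t⁻¹ := by field_simp; ring
    have hB : B t⁻¹ * B t = 1 := by rw [← map_mul, inv_mul_cancel₀ ht0, map_one]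
    rw [if_neg ht, gaussSum_mulShift_of_ne_zero θ _ h1, h2,
      gaussSum_mulShift_of_ne_zero θ _ (mul_ne_zero h1 (inv_ne_zero ht0))]
    simp only [MulChar.inv_apply', MulChar.mul_apply, map_mul, mul_inv, inv_inv]
    linear_combination A t * A (1 + t)⁻¹ * B (1 + t)⁻¹ * C (1 + t)⁻¹ * D (1 + t)⁻¹ * D t *
      gaussSum (A * C) θ * gaussSum (B * D) θ * hB
  rw [sum_congr rfl fun t _ ↦ hterm t, sum_add_distrib, sum_ite_eq', if_pos (mem_univ _), mul_sum]

theorem gaussSum_mul_gaussSum_inv (hθ : θ ≠ 1) {χ : MulChar F R} (hχ : χ ≠ 1) :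
    gaussSum χ θ * gaussSum χ⁻¹ θ = χ (-1) * Fintype.card F := by
  rw [← mul_gaussSum_inv_eq_gaussSum χ⁻¹ θ, χ.inv_apply_neg_one, mul_left_comm,
    gaussSum_mul_gaussSum_eq_card hχ (IsPrimitive.of_ne_one hθ)]

theorem apply_neg_one_mul_ite_mul_ite_eq_ite (hθ : θ ≠ 1) (A B C D : MulChar F R) :
    (A * B) (-1) * ((if A * C = 1 then (Fintype.card F : R) - 1 else 0) *
        if B * D = 1 then (Fintype.card F : R) - 1 else 0) =
      if A * B * C * D = 1 then ((Fintype.card F : R) - 1) *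
        ((A * B) (-1) * Fintype.card F - (A * D) (-1) * gaussSum (A * C) θ * gaussSum (B * D) θ)
      else 0 := by
  have hsplit : A * C * (B * D) = A * B * C * D := by ac_rfl
  by_cases hE : A * B * C * D = 1
  · have hBD : B * D = (A * C)⁻¹ := eq_inv_of_mul_eq_one_right (hsplit.trans hE)
    have hsign := MulChar.apply_neg_one_mul_apply_neg_one_of_mul_eq_one hE
    simp only [if_pos hE, hBD, inv_eq_one]
    by_cases hAC : A * C = 1
    · rw [hAC, MulChar.one_apply isUnit_one.neg, one_mul] at hsign
      rw [if_pos hAC, hAC, inv_one, gaussSum_one_left hθ]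
      linear_combination ((Fintype.card F : R) - 1) * hsign
    · rw [if_neg hAC]
      linear_combination ((Fintype.card F : R) - 1) * (A * D) (-1) *
          gaussSum_mul_gaussSum_inv θ hθ hAC + ((Fintype.card F : R) - 1) * Fintype.card F * hsign
  · have hnot_both : A * C = 1 → B * D ≠ 1 :=
      fun hAC hBD ↦ hE (by rw [← hsplit, hAC, hBD, one_mul])
    rw [if_neg hE]
    by_cases hAC : A * C = 1
    · rw [if_neg (hnot_both hAC), mul_zero, mul_zero]
    · rw [if_neg hAC, zero_mul, mul_zero]

end GaussSum

section Complex

variable (θ : AddChar F ℂ)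

theorem sum_mulChar_apply (a : F) :
    ∑ χ : MulChar F ℂ, χ a = if a = 1 then (Fintype.card F : ℂ) - 1 else 0 := by
  have : NeZero (Monoid.exponent Fˣ : ℂ) := ⟨by exact_mod_cast Monoid.exponent_ne_zero_of_finite⟩
  rw [MulChar.sum_apply_eq_ite, natCard_units_cast]

theorem sum_gaussSum_mul_gaussSum_mul_gaussSum_mul_gaussSum (A B C D : MulChar F ℂ) :
    ∑ χ : MulChar F ℂ,
        gaussSum (A * χ) θ * gaussSum (B * χ) θ * gaussSum (C * χ⁻¹) θ * gaussSum (D * χ⁻¹) θ =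
      ((Fintype.card F : ℂ) - 1) * ∑ t, A t * B t⁻¹ *
        gaussSum (A * C) (θ.mulShift (1 + t)) * gaussSum (B * D) (θ.mulShift (1 + t⁻¹)) := by
  have hpair (E G χ : MulChar F ℂ) : gaussSum (E * χ) θ * gaussSum (G * χ⁻¹) θ =
      ∑ t, (E * χ) t * gaussSum (E * G) (θ.mulShift (1 + t)) := by
    rw [gaussSum_mul_gaussSum_eq_sum_mulShift, mul_mul_mul_comm, mul_inv_cancel, mul_one]
  calc _ = ∑ χ : MulChar F ℂ, (∑ t, (A * χ) t * gaussSum (A * C) (θ.mulShift (1 + t))) *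
          ∑ s, (B * χ) s * gaussSum (B * D) (θ.mulShift (1 + s)) := by
        refine sum_congr rfl fun χ _ ↦ ?_
        rw [← hpair, ← hpair]
        ring
    _ = ∑ t, ∑ s, A t * B s * gaussSum (A * C) (θ.mulShift (1 + t)) *
          gaussSum (B * D) (θ.mulShift (1 + s)) * ∑ χ : MulChar F ℂ, χ (t * s) := by
        simp_rw [sum_mul_sum, mul_sum]
        rw [sum_comm]
        refine sum_congr rfl fun t _ ↦ ?_
        rw [sum_comm]
        refine sum_congr rfl fun s _ ↦ sum_congr rfl fun χ _ ↦ ?_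
        rw [MulChar.mul_apply, MulChar.mul_apply, map_mul]
        ring
    _ = _ := by
        simp only [sum_mulChar_apply, mul_sum]
        refine sum_congr rfl fun t _ ↦ ?_
        rcases eq_or_ne t 0 with rfl | ht
        · simp [MulChar.map_zero]
        simp only [mul_eq_one_iff_inv_eq₀ ht, mul_ite, mul_zero, sum_ite_eq, mem_univ, if_true]
        ring

theorem gaussSum_mul_gaussSum_div_gaussSum_mul (hθ : θ ≠ 1) (φ ψ : MulChar F ℂ) :
    gaussSum φ θ * gaussSum ψ θ / gaussSum (φ * ψ) θ =
      ∑ t, φ t * (φ * ψ)⁻¹ (1 + t) -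
        φ (-1) * if φ * ψ = 1 then (Fintype.card F : ℂ) - 1 else 0 := by
  rw [gaussSum_mul_gaussSum_eq_add]
  split_ifs with h
  · rw [h, gaussSum_one_left hθ]
    ring
  · field_simp [gaussSum_ne_zero_of_nontrivial (by simp) h (IsPrimitive.of_ne_one hθ)]
    ring

end Complex

end FiniteField

open scoped Classical in
theorem helversen_pasotto {F : Type*} [Field F] [Fintype F]
    (θ : AddChar F ℂ) (hθ : θ ≠ 1) (A B C D : MulChar F ℂ) :
    (1 / ((Fintype.card F : ℂ) - 1)) *
      ∑ χ : MulChar F ℂ,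
        gaussSum (A * χ) θ * gaussSum (B * χ) θ * gaussSum (C * χ⁻¹) θ * gaussSum (D * χ⁻¹) θ =
    gaussSum (A * C) θ * gaussSum (A * D) θ * gaussSum (B * C) θ * gaussSum (B * D) θ /
        gaussSum (A * B * C * D) θ +
      (Fintype.card F : ℂ) * ((Fintype.card F : ℂ) - 1) * (A * B) (-1) *
        (if A * B * C * D = 1 then 1 else 0) := by
  have hq : (Fintype.card F : ℂ) - 1 ≠ 0 :=
    sub_ne_zero.mpr (by exact_mod_cast Fintype.one_lt_card.ne')
  have hE : A * D * (B * C) = A * B * C * D := by ac_rfl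
  have hrhs : gaussSum (A * C) θ * gaussSum (A * D) θ * gaussSum (B * C) θ *
      gaussSum (B * D) θ / gaussSum (A * B * C * D) θ = gaussSum (A * C) θ * gaussSum (B * D) θ *
        (gaussSum (A * D) θ * gaussSum (B * C) θ / gaussSum (A * D * (B * C)) θ) := by
    rw [hE]
    ring
  rw [sum_gaussSum_mul_gaussSum_mul_gaussSum_mul_gaussSum, one_div, ← mul_assoc,
    inv_mul_cancel₀ hq, one_mul, sum_mul_gaussSum_mulShift_mul_gaussSum_mulShift,
    apply_neg_one_mul_ite_mul_ite_eq_ite θ hθ, hrhs, gaussSum_mul_gaussSum_div_gaussSum_mul θ hθ,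
    hE]
  split_ifs <;> ring
end

section
/- For multiplicative characters A, B, C of F_q with AB ≠ C, the sum (1/(q-1))·Σ_χ [g(Aχ)/g(A)]·[g(Bχ)/g(B)]·[g((Cχ)¯)/g(C̄)]·g(χ̄), over all multiplicative characters χ, equals g(AC̄)g(BC̄)/(g(C̄)g(ABC̄)). -/
/-!
Write ψ = A B C̄. Expanding the four Gauss sums over units and summing over χ first,
orthogonality restricts the sum to x y = z w, which we parametrise as x = z a, y = z b,
w = z a b. Summing over z then produces g(ψ) ψ̄((1 + a)(1 + b)), so the whole sum is
(q - 1) g(ψ) S_A S_B with S_A = Σ_a A(a) ψ̄(1 + a). Finally g(ψ) S_A = g(A) g(Āψ):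
expand g(ψ) ψ̄(1 + a) back into Σ_z ψ(z) θ(z(1 + a)) and sum over a first.
-/

open Finset AddChar

namespace MulChar

variable {M R : Type*} [CommMonoidWithZero M] [Fintype M] [DecidableEq M] [CommRing R]

lemma sum_units_apply_mul (χ : MulChar M R) (f : M → R) :
    ∑ u : Mˣ, χ u * f u = ∑ a, χ a * f a := by
  refine (sum_map univ ⟨Units.val, Units.val_injective⟩ fun a ↦ χ a * f a).symm.trans ?_
  refine sum_subset (subset_univ _) fun a _ ha ↦ ?_
  have hu : ¬IsUnit a := fun ⟨u, hu⟩ ↦ ha (by simp [← hu])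
  rw [map_nonunit χ hu, zero_mul]

lemma sum_mul_apply_mul_sum_mul_apply (χ : MulChar M R) (f g : Mˣ → R) :
    (∑ x, f x * χ x) * (∑ y, g y * χ y) = ∑ u, (∑ x, f x * g (x⁻¹ * u)) * χ u := by
  rw [sum_mul_sum]
  conv_rhs => simp only [sum_mul]; rw [sum_comm]
  refine sum_congr rfl fun x _ ↦ ?_
  refine Fintype.sum_equiv (Equiv.mulLeft x) _ _ fun y ↦ ?_
  simp only [Equiv.coe_mulLeft, inv_mul_cancel_left, Units.val_mul, map_mul]
  ring

variable [IsDomain R] [HasEnoughRootsOfUnity R (Monoid.exponent Mˣ)] [Fintype (MulChar M R)]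

lemma sum_apply_units_eq_ite (u : Mˣ) :
    ∑ χ : MulChar M R, χ u = if u = 1 then (Fintype.card Mˣ : R) else 0 := by
  split_ifs with hu
  · simp only [hu, Units.val_one, map_one, sum_const, card_univ, nsmul_eq_mul, mul_one,
      Fintype.card_eq_nat_card, card_eq_card_units_of_hasEnoughRootsOfUnity M R]
  · obtain ⟨χ₀, hχ₀⟩ := exists_apply_ne_one_of_hasEnoughRootsOfUnity M R
      (Units.val_eq_one.not.mpr hu)
    refine eq_zero_of_mul_eq_self_left hχ₀ ?_
    simp only [mul_sum, ← mul_apply]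
    exact Fintype.sum_bijective _ (Group.mulLeft_bijective χ₀) _ _ fun _ ↦ rfl

lemma sum_sum_mul_apply_mul_sum_mul_inv_apply (f g : Mˣ → R) :
    ∑ χ : MulChar M R, (∑ u, f u * χ u) * (∑ v, g v * χ⁻¹ v) =
      Fintype.card Mˣ * ∑ u, f u * g u := by
  have hχ : ∀ (χ : MulChar M R) (u v : Mˣ), χ u * χ⁻¹ v = χ ↑(u * v⁻¹) := fun χ u v ↦ by
    rw [inv_apply, Ring.inverse_unit, Units.val_mul, map_mul]
  calc ∑ χ : MulChar M R, (∑ u, f u * χ u) * (∑ v, g v * χ⁻¹ v)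
      = ∑ u, ∑ v, f u * g v * ∑ χ : MulChar M R, χ ↑(u * v⁻¹) := by
        simp_rw [sum_mul_sum, mul_sum]
        rw [sum_comm]
        refine sum_congr rfl fun u _ ↦ ?_
        rw [sum_comm]
        refine sum_congr rfl fun v _ ↦ sum_congr rfl fun χ _ ↦ ?_
        rw [← hχ]
        ring
    _ = Fintype.card Mˣ * ∑ u, f u * g u := by
        simp only [sum_apply_units_eq_ite, mul_inv_eq_one, mul_ite, mul_zero, sum_ite_eq, mem_univ,
          if_true, mul_sum]
        exact sum_congr rfl fun u _ ↦ mul_comm _ _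

lemma sum_two_sums_mul_two_sums_inv (f₁ f₂ f₃ f₄ : Mˣ → R) :
    ∑ χ : MulChar M R, (∑ x, f₁ x * χ x) * (∑ y, f₂ y * χ y) *
        ((∑ z, f₃ z * χ⁻¹ z) * (∑ w, f₄ w * χ⁻¹ w)) =
      Fintype.card Mˣ * ∑ z, ∑ a, ∑ b, f₁ (z * a) * f₂ (z * b) * (f₃ z * f₄ (z * a * b)) := by
  simp_rw [sum_mul_apply_mul_sum_mul_apply, sum_sum_mul_apply_mul_sum_mul_inv_apply, sum_mul_sum]
  congr 1
  calc _ = ∑ z, ∑ x, ∑ u, f₁ x * f₂ (x⁻¹ * u) * (f₃ z * f₄ (z⁻¹ * u)) := by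
        rw [sum_comm]
        exact (sum_congr rfl fun x _ ↦ sum_comm).trans sum_comm
    _ = _ := by
        refine sum_congr rfl fun z _ ↦ (Fintype.sum_equiv (Equiv.mulLeft z) _ _ fun a ↦ ?_).symm
        refine Fintype.sum_equiv (Equiv.mulLeft (z * a * z)) _ _ fun b ↦ ?_
        have h₂ : (z * a)⁻¹ * (z * a * z * b) = z * b := by group
        have h₄ : z⁻¹ * (z * a * z * b) = z * a * b := by
          simp only [mul_assoc, inv_mul_cancel_left, mul_left_comm a]
        simp only [Equiv.coe_mulLeft, h₂, h₄]

end MulChar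

section GaussSum

variable {F R : Type*} [Field F] [Fintype F] [CommRing R]

lemma gaussSum_eq_sum_units [DecidableEq F] (χ : MulChar F R) (ψ : AddChar F R) :
    gaussSum χ ψ = ∑ u : Fˣ, χ u * ψ u :=
  (χ.sum_units_apply_mul ψ).symm

variable [IsDomain R]

lemma gaussSum_mulShift_eq_of_ne_one {χ : MulChar F R} (hχ : χ ≠ 1) (ψ : AddChar F R) (c : F) :
    gaussSum χ (ψ.mulShift c) = χ⁻¹ c * gaussSum χ ψ := by
  rcases eq_or_ne c 0 with rfl | hc
  · rw [mulShift_zero, gaussSum_one_right hχ, MulChar.map_zero, zero_mul]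
  · exact gaussSum_mulShift_eq χ ψ (Units.mk0 c hc)

lemma gaussSum_ne_zero_of_ne_one (hF : (Fintype.card F : R) ≠ 0) {ψ : AddChar F R} (hψ : ψ ≠ 1)
    (χ : MulChar F R) : gaussSum χ ψ ≠ 0 := by
  rcases eq_or_ne χ 1 with rfl | hχ
  · rw [gaussSum_one_left hψ]
    exact neg_ne_zero.mpr one_ne_zero
  · exact gaussSum_ne_zero_of_nontrivial hF hχ (IsPrimitive.of_ne_one hψ)

variable [DecidableEq F]

lemma gaussSum_mul_sum_apply_mul_inv_apply_one_add {ψ : MulChar F R} (hψ : ψ ≠ 1)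
    (χ : MulChar F R) (θ : AddChar F R) :
    gaussSum ψ θ * ∑ a : Fˣ, χ a * ψ⁻¹ (1 + a) = gaussSum χ θ * gaussSum (χ⁻¹ * ψ) θ :=
  calc gaussSum ψ θ * ∑ a : Fˣ, χ a * ψ⁻¹ (1 + a)
      = ∑ a : Fˣ, χ a * gaussSum ψ (θ.mulShift (1 + a)) := by
        rw [mul_sum]
        refine sum_congr rfl fun a _ ↦ ?_
        rw [gaussSum_mulShift_eq_of_ne_one hψ]
        ring
    _ = ∑ z : Fˣ, ψ z * θ z * ∑ a : Fˣ, χ a * θ (z * a) := by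
        simp only [gaussSum_eq_sum_units ψ, mulShift_apply, mul_sum]
        rw [sum_comm]
        refine sum_congr rfl fun z _ ↦ sum_congr rfl fun a _ ↦ ?_
        rw [add_mul, one_mul, map_add_eq_mul, mul_comm (a : F)]
        ring
    _ = ∑ z : Fˣ, ψ z * θ z * (χ⁻¹ z * gaussSum χ θ) := by
        refine sum_congr rfl fun z _ ↦ ?_
        rw [← gaussSum_mulShift_eq χ θ z, gaussSum_eq_sum_units]
        simp only [mulShift_apply]
    _ = gaussSum χ θ * gaussSum (χ⁻¹ * ψ) θ := by
        rw [gaussSum_eq_sum_units (χ⁻¹ * ψ), mul_sum]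
        refine sum_congr rfl fun z _ ↦ ?_
        rw [MulChar.mul_apply]
        ring

variable [HasEnoughRootsOfUnity R (Monoid.exponent Fˣ)] [Fintype (MulChar F R)]

lemma sum_gaussSum_four_eq_sum_units (θ : AddChar F R) (A B C : MulChar F R) :
    ∑ χ : MulChar F R,
        gaussSum (A * χ) θ * gaussSum (B * χ) θ * gaussSum (C * χ)⁻¹ θ * gaussSum χ⁻¹ θ =
      Fintype.card Fˣ * ∑ z : Fˣ, ∑ a : Fˣ, ∑ b : Fˣ, A ↑(z * a) * θ ↑(z * a) *
        (B ↑(z * b) * θ ↑(z * b)) * (C⁻¹ z * θ z * θ ↑(z * a * b)) := by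
  have hg : ∀ φ χ : MulChar F R, gaussSum (φ * χ) θ = ∑ u : Fˣ, φ u * θ u * χ u := fun φ χ ↦ by
    rw [gaussSum_eq_sum_units]
    exact sum_congr rfl fun u _ ↦ by rw [MulChar.mul_apply]; ring
  have h4 := MulChar.sum_two_sums_mul_two_sums_inv (R := R) (fun u : Fˣ ↦ A u * θ u)
    (fun u ↦ B u * θ u) (fun u ↦ C⁻¹ u * θ u) (fun u ↦ θ u)
  beta_reduce at h4
  rw [← h4]
  refine sum_congr rfl fun χ _ ↦ ?_
  rw [mul_inv, hg, hg, hg, gaussSum_eq_sum_units χ⁻¹]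
  simp only [mul_comm (χ⁻¹ _) (θ _), mul_assoc]

lemma gaussSum_mul_sum_gaussSum_four (θ : AddChar F R) {A B C : MulChar F R}
    (hψ : A * B * C⁻¹ ≠ 1) :
    gaussSum (A * B * C⁻¹) θ * ∑ χ : MulChar F R,
        gaussSum (A * χ) θ * gaussSum (B * χ) θ * gaussSum (C * χ)⁻¹ θ * gaussSum χ⁻¹ θ =
      Fintype.card Fˣ *
        (gaussSum A θ * gaussSum (B * C⁻¹) θ * (gaussSum B θ * gaussSum (A * C⁻¹) θ)) := by
  set ψ := A * B * C⁻¹ with hψ_def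
  have hz : ∀ a : Fˣ, ∑ z : Fˣ, ∑ b : Fˣ, A ↑(z * a) * θ ↑(z * a) * (B ↑(z * b) * θ ↑(z * b)) *
      (C⁻¹ z * θ z * θ ↑(z * a * b)) =
        ∑ b : Fˣ, A a * B b * (ψ⁻¹ ((1 + a) * (1 + b)) * gaussSum ψ θ) := by
    intro a
    rw [sum_comm]
    refine sum_congr rfl fun b _ ↦ ?_
    rw [← gaussSum_mulShift_eq_of_ne_one hψ, gaussSum_eq_sum_units, mul_sum]
    refine sum_congr rfl fun z _ ↦ ?_
    have harg : (1 + (a : F)) * (1 + b) * z = ↑(z * a) + ↑(z * b) + z + ↑(z * a * b) := by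
      push_cast
      ring
    simp only [mulShift_apply, harg, map_add_eq_mul, Units.val_mul, map_mul, ψ, MulChar.mul_apply]
    ring
  have hA : A⁻¹ * ψ = B * C⁻¹ := by rw [hψ_def, mul_assoc, inv_mul_cancel_left]
  have hB : B⁻¹ * ψ = A * C⁻¹ := by
    rw [hψ_def, mul_comm A B, mul_assoc, inv_mul_cancel_left]
  calc gaussSum ψ θ * ∑ χ : MulChar F R,
        gaussSum (A * χ) θ * gaussSum (B * χ) θ * gaussSum (C * χ)⁻¹ θ * gaussSum χ⁻¹ θ
      = Fintype.card Fˣ * ((gaussSum ψ θ * ∑ a : Fˣ, A a * ψ⁻¹ (1 + a)) *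
          (gaussSum ψ θ * ∑ b : Fˣ, B b * ψ⁻¹ (1 + b))) := by
        rw [sum_gaussSum_four_eq_sum_units, sum_comm]
        simp only [hz, map_mul]
        rw [mul_mul_mul_comm (gaussSum ψ θ) _ (gaussSum ψ θ), sum_mul_sum]
        simp only [mul_sum]
        exact sum_congr rfl fun a _ ↦ sum_congr rfl fun b _ ↦ by ring
    _ = _ := by
        rw [gaussSum_mul_sum_apply_mul_inv_apply_one_add hψ,
          gaussSum_mul_sum_apply_mul_inv_apply_one_add hψ, hA, hB]

end GaussSum

theorem gauss_analogue_sum {F : Type*} [Field F] [Fintype F]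
    (θ : AddChar F ℂ) (hθ : θ ≠ 1) (A B C : MulChar F ℂ) (h : A * B ≠ C) :
    (1 / ((Fintype.card F : ℂ) - 1)) *
      ∑ χ : MulChar F ℂ,
        (gaussSum (A * χ) θ / gaussSum A θ) * (gaussSum (B * χ) θ / gaussSum B θ) *
          (gaussSum (C * χ)⁻¹ θ / gaussSum C⁻¹ θ) * gaussSum χ⁻¹ θ =
    gaussSum (A * C⁻¹) θ * gaussSum (B * C⁻¹) θ /
      (gaussSum C⁻¹ θ * gaussSum (A * B * C⁻¹) θ) := by
  classical
  have hq : (Fintype.card F : ℂ) - 1 = Fintype.card Fˣ := by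
    rw [Fintype.card_units, Nat.cast_sub Fintype.card_pos, Nat.cast_one]
  have hg := gaussSum_ne_zero_of_ne_one (Nat.cast_ne_zero.mpr Fintype.card_ne_zero) hθ
  have key := gaussSum_mul_sum_gaussSum_four θ (mul_inv_eq_one.not.mpr h)
  simp only [div_mul_div_comm]
  simp only [div_mul_eq_mul_div]
  rw [← sum_div, hq]
  field_simp [hg]
  linear_combination key
end

section
/- For q odd with quadratic character φ, in the degenerate case A = ε and B = C = φ: 3F2*(ε,φ,φ; φ,φ | 1)_q = (-q² + 2q + 1)/q. -/
/-- The finite field hypergeometric function `ₙ₊₁Fₙ*` of McCarthy. -/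
noncomputable def hypF {F : Type*} [Field F] [Fintype F] (θ : AddChar F ℂ) {n : ℕ}
    (A : Fin (n + 1) → MulChar F ℂ) (B : Fin n → MulChar F ℂ) (x : F) : ℂ :=
  (1 / ((Fintype.card F : ℂ) - 1)) *
    ∑ χ : MulChar F ℂ,
      (∏ i, gaussSum (A i * χ) θ / gaussSum (A i) θ) *
        (∏ j, gaussSum (B j * χ)⁻¹ θ / gaussSum (B j)⁻¹ θ) *
        gaussSum χ⁻¹ θ * (χ (-1)) ^ (n + 1) * χ x

/-! In the `χ`-term of `₃F₂*(ε, B, C; B, C | x)` every Gauss sum pairs off with the Gauss sum of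
the inverse character, and `g(χ) g(χ̄) = χ(-1) q` for `χ ≠ ε`, while `g(ε) = -1`. For `B = C = φ`
and `x = 1` the `χ`-term is therefore `-q` unless `χ ∈ {ε, φ}`, where it is `-1` and `-1/q`;
summing over the `q - 1` characters gives the evaluation. -/

theorem Fintype.sum_eq_card_mul_add_of_eq_off_pair {α M : Type*} [Fintype α] [CommRing M]
    {f : α → M} {a b : α} (hab : a ≠ b) (c : M) (hf : ∀ x, x ≠ a → x ≠ b → f x = c) :
    ∑ x, f x = Fintype.card α * c + (f a - c) + (f b - c) := by
  have hzero : ∑ x, (f x - c) = (f a - c) + (f b - c) :=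
    Fintype.sum_eq_add a b hab fun x ⟨hxa, hxb⟩ ↦ sub_eq_zero.mpr (hf x hxa hxb)
  rw [add_assoc, ← hzero, Finset.sum_sub_distrib, Finset.sum_const, nsmul_eq_mul,
    Finset.card_univ]
  ring

theorem MulChar.apply_neg_one_sq {R R' : Type*} [CommRing R] [CommMonoidWithZero R']
    (χ : MulChar R R') : χ (-1) ^ 2 = 1 := by
  rw [← map_pow, neg_one_sq, map_one]

theorem MulChar.card_complex_eq_card_sub_one {F : Type*} [Field F] [Fintype F] :
    Fintype.card (MulChar F ℂ) = Fintype.card F - 1 := by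
  rw [← Nat.card_eq_fintype_card, MulChar.card_eq_card_units_of_hasEnoughRootsOfUnity F ℂ,
    Nat.card_units, Nat.card_eq_fintype_card]

section GaussPair

variable {R R' : Type*} [Field R] [Fintype R] [CommRing R']

noncomputable def gaussPair (ψ : AddChar R R') (χ : MulChar R R') : R' :=
  gaussSum χ ψ * gaussSum χ⁻¹ ψ

variable [IsDomain R'] {ψ : AddChar R R'}

theorem gaussPair_of_ne_one (hψ : ψ.IsPrimitive) {χ : MulChar R R'} (hχ : χ ≠ 1) :
    gaussPair ψ χ = χ (-1) * Fintype.card R := by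
  rw [gaussPair, ← mul_gaussSum_inv_eq_gaussSum χ⁻¹, mul_left_comm,
    gaussSum_mul_gaussSum_eq_card hχ hψ, MulChar.inv_apply', inv_neg_one]

theorem sq_gaussPair_of_ne_one (hψ : ψ.IsPrimitive) {χ : MulChar R R'} (hχ : χ ≠ 1) :
    gaussPair ψ χ ^ 2 = (Fintype.card R : R') ^ 2 := by
  rw [gaussPair_of_ne_one hψ hχ, mul_pow, χ.apply_neg_one_sq, one_mul]

theorem gaussPair_one (hψ : ψ ≠ 1) : gaussPair ψ (1 : MulChar R R') = 1 := by
  rw [gaussPair, inv_one, gaussSum_one_left hψ]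
  ring

end GaussPair

theorem hypF_one_cons_eq_sum_gaussPair {F : Type*} [Field F] [Fintype F] (θ : AddChar F ℂ)
    (hθ : θ ≠ 1) (B C : MulChar F ℂ) (x : F) :
    hypF θ ![1, B, C] ![B, C] x = -(1 / ((Fintype.card F : ℂ) - 1)) *
      ∑ χ : MulChar F ℂ, gaussPair θ χ * gaussPair θ (B * χ) * gaussPair θ (C * χ) /
        (gaussPair θ B * gaussPair θ C) * χ (-1) ^ 3 * χ x := by
  simp only [hypF, gaussPair, Fin.prod_univ_succ, Fin.prod_univ_zero, Matrix.cons_val_zero,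
    Matrix.cons_val_succ, one_mul, mul_one, gaussSum_one_left hθ, neg_mul, ← mul_neg,
    ← Finset.sum_neg_distrib]
  congr 1
  refine Finset.sum_congr rfl fun χ _ ↦ ?_
  ring

section QuadraticTerms

variable {R R' : Type*} [Field R] [Fintype R] [Field R'] [CharZero R'] {ψ : AddChar R R'}
  {φ : MulChar R R'}

theorem gaussPair_term_of_ne_one (hψ : ψ ≠ 1) (hφ : φ ≠ 1) {χ : MulChar R R'} (hχ : χ ≠ 1)
    (hφχ : φ * χ ≠ 1) :
    gaussPair ψ χ * gaussPair ψ (φ * χ) * gaussPair ψ (φ * χ) /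
      (gaussPair ψ φ * gaussPair ψ φ) * χ (-1) ^ 3 = Fintype.card R := by
  have hψ := AddChar.IsPrimitive.of_ne_one hψ
  have hq : (Fintype.card R : R') ≠ 0 := Nat.cast_ne_zero.mpr Fintype.card_ne_zero
  rw [mul_assoc (gaussPair ψ χ), ← sq, ← sq, sq_gaussPair_of_ne_one hψ hφχ,
    sq_gaussPair_of_ne_one hψ hφ, gaussPair_of_ne_one hψ hχ]
  field_simp
  linear_combination (χ (-1) ^ 2 + 1) * χ.apply_neg_one_sq

theorem gaussPair_term_one (hψ : ψ ≠ 1) (hφ : φ ≠ 1) :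
    gaussPair ψ 1 * gaussPair ψ (φ * 1) * gaussPair ψ (φ * 1) /
      (gaussPair ψ φ * gaussPair ψ φ) * (1 : MulChar R R') (-1) ^ 3 = 1 := by
  have hq : (Fintype.card R : R') ≠ 0 := Nat.cast_ne_zero.mpr Fintype.card_ne_zero
  have hφ₀ : gaussPair ψ φ ≠ 0 := by
    rw [gaussPair_of_ne_one (.of_ne_one hψ) hφ]
    exact mul_ne_zero (isUnit_one.neg.map φ).ne_zero hq
  rw [gaussPair_one hψ, mul_one, one_mul, div_self (mul_ne_zero hφ₀ hφ₀),
    MulChar.one_apply isUnit_one.neg, one_pow, mul_one]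

theorem gaussPair_term_self (hψ : ψ ≠ 1) (hφ : φ ≠ 1) (hφφ : φ * φ = 1) :
    gaussPair ψ φ * gaussPair ψ (φ * φ) * gaussPair ψ (φ * φ) /
      (gaussPair ψ φ * gaussPair ψ φ) * φ (-1) ^ 3 = 1 / Fintype.card R := by
  have hq : (Fintype.card R : R') ≠ 0 := Nat.cast_ne_zero.mpr Fintype.card_ne_zero
  have hu : φ (-1) ≠ 0 := (isUnit_one.neg.map φ).ne_zero
  rw [hφφ, gaussPair_one hψ, gaussPair_of_ne_one (.of_ne_one hψ) hφ]
  field_simp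
  exact φ.apply_neg_one_sq

end QuadraticTerms

theorem hypF_3F2_quadratic_general {F : Type*} [Field F] [Fintype F]
    (θ : AddChar F ℂ) (hθ : θ ≠ 1)
    (φ : MulChar F ℂ) (hφ : φ ^ 2 = 1) (hφ' : φ ≠ 1) :
    hypF θ ![(1 : MulChar F ℂ), φ, φ] ![φ, φ] (1 : F) =
      (-(Fintype.card F : ℂ) ^ 2 + 2 * (Fintype.card F : ℂ) + 1) / (Fintype.card F : ℂ) := by
  have hφφ : φ * φ = 1 := by rw [← sq, hφ]
  have hφχ {χ : MulChar F ℂ} (hχ : χ ≠ φ) : φ * χ ≠ 1 := fun h ↦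
    hχ ((eq_inv_of_mul_eq_one_right h).trans (inv_eq_of_mul_eq_one_right hφφ))
  have hq : (Fintype.card F : ℂ) ≠ 0 := Nat.cast_ne_zero.mpr Fintype.card_ne_zero
  have hcard : (Fintype.card (MulChar F ℂ) : ℂ) = Fintype.card F - 1 := by
    rw [MulChar.card_complex_eq_card_sub_one, Nat.cast_pred Fintype.card_pos]
  have hq₁ : (Fintype.card F : ℂ) - 1 ≠ 0 := hcard ▸ Nat.cast_ne_zero.mpr Fintype.card_ne_zero
  simp only [hypF_one_cons_eq_sum_gaussPair θ hθ, map_one, mul_one]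
  rw [Fintype.sum_eq_card_mul_add_of_eq_off_pair hφ'.symm (Fintype.card F : ℂ)
      fun χ h₁ hφ ↦ gaussPair_term_of_ne_one hθ hφ' h₁ (hφχ hφ),
    gaussPair_term_one hθ hφ', gaussPair_term_self hθ hφ' hφφ, hcard]
  field_simp
  ring

/-- Degenerate case `A = ε`, `B = C = φ` (the quadratic character) of the `₃F₂*` evaluation. -/
theorem hypF_3F2_quadratic {F : Type*} [Field F] [Fintype F]
    (θ : AddChar F ℂ) (hθ : θ ≠ 1) (hq : Odd (Fintype.card F))
    (φ : MulChar F ℂ) (hφ : φ ^ 2 = 1) (hφ' : φ ≠ 1) :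
    hypF θ ![(1 : MulChar F ℂ), φ, φ] ![φ, φ] (1 : F) =
      (-(Fintype.card F : ℂ) ^ 2 + 2 * (Fintype.card F : ℂ) + 1) / (Fintype.card F : ℂ) :=
  hypF_3F2_quadratic_general θ hθ φ hφ hφ'
end

section
/- (Vanishing of well-poised functions at non-squares) For every n ≥ 0 and multiplicative characters A_0, A_1, ..., A_n of F_q such that A_0 is not a square of any multiplicative character: (n+1)F_n*(A_0,A_1,...,A_n; A_0Ā_1,...,A_0Ā_n | (-1)^n)_q = 0. -/
/-!
The map `χ ↦ (A₀ χ)⁻¹` is an involution of the character group which permutes the Gauss sums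
in the summand of a well-poised `ₙ₊₁Fₙ*` among themselves, so it fixes their product. For
`x = (-1)ⁿ` the remaining factor `χ(-1)ⁿ⁺¹ χ(x)` is just `χ(-1)`, which the involution multiplies
by `A₀(-1)`. A non-square character is odd: the character group is cyclic, so a non-square is an
odd power of a generator, and a generator takes the value `-1` at the element `-1` of order two.
Hence the summands cancel in pairs.
-/

theorem isSquare_of_odd_natCard {G : Type*} [Group G] (hG : Odd (Nat.card G)) (g : G) :
    IsSquare g := by
  obtain ⟨m, hm⟩ := hG
  refine ⟨g ^ (m + 1), ?_⟩
  rw [← pow_add, show m + 1 + (m + 1) = Nat.card G + 1 by omega, pow_succ, pow_card_eq_one',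
    one_mul]

theorem Fintype.sum_eq_zero_of_comp_equiv_eq_neg {α M : Type*} [Fintype α] [AddCommGroup M]
    [IsAddTorsionFree M] (e : α ≃ α) {f : α → M} (hf : ∀ x, f (e x) = -f x) :
    ∑ x, f x = 0 := by
  refine self_eq_neg.mp ?_
  rw [← Finset.sum_neg_distrib, ← e.sum_comp]
  simp only [hf]

namespace MulChar

theorem apply_neg_one_mul_self_s15 {R R' : Type*} [CommRing R] [CommMonoidWithZero R']
    (χ : MulChar R R') : χ (-1) * χ (-1) = 1 := by
  rw [← map_mul, neg_mul_neg, one_mul, map_one]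

theorem apply_neg_one_pow_succ_mul_apply_neg_one_pow {R R' : Type*} [CommRing R]
    [CommMonoidWithZero R'] (χ : MulChar R R') (n : ℕ) :
    χ (-1) ^ (n + 1) * χ ((-1) ^ n) = χ (-1) := by
  rw [map_pow, ← pow_add, show n + 1 + n = 2 * n + 1 by ring, pow_succ, pow_mul, sq,
    apply_neg_one_mul_self_s15, one_pow, one_mul]

section FiniteField

variable {F R : Type*} [Field F] [Fintype F] [CommRing R]
  [HasEnoughRootsOfUnity R (Monoid.exponent Fˣ)]

theorem odd_natCard_of_ringChar_eq_two (hF : ringChar F = 2) : Odd (Nat.card (MulChar F R)) := by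
  rw [card_eq_card_units_of_hasEnoughRootsOfUnity, Nat.card_units, Nat.card_eq_fintype_card]
  exact Nat.Even.sub_odd Fintype.card_pos (Nat.even_iff.mpr (FiniteField.even_card_of_char_two hF))
    odd_one

instance isCyclic : IsCyclic (MulChar F R) :=
  (MulEquiv.isCyclic (mulEquiv_units F R).some).mpr inferInstance

theorem apply_neg_one_eq_neg_one_of_isGenerator [IsDomain R] (hF : (-1 : F) ≠ 1)
    {γ : MulChar F R} (hγ : ∀ χ, χ ∈ Subgroup.zpowers γ) : γ (-1) = -1 := by
  refine (mul_self_eq_one_iff.mp γ.apply_neg_one_mul_self_s15).resolve_left fun hγ1 => ?_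
  obtain ⟨χ, hχ⟩ := exists_apply_ne_one_of_hasEnoughRootsOfUnity F R hF
  obtain ⟨k, rfl⟩ := mem_powers_iff_mem_zpowers.mpr (hγ χ)
  apply hχ
  simpa [hγ1] using pow_apply_coe γ k (-1)

theorem apply_neg_one_eq_neg_one_of_not_isSquare [IsDomain R] {χ : MulChar F R}
    (hχ : ¬ IsSquare χ) : χ (-1) = -1 := by
  have hF : (-1 : F) ≠ 1 := fun h =>
    hχ (isSquare_of_odd_natCard (odd_natCard_of_ringChar_eq_two (neg_one_eq_one_iff.mp h)) χ)
  obtain ⟨γ, hγ⟩ := IsCyclic.exists_generator (α := MulChar F R)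
  obtain ⟨k, rfl⟩ := mem_powers_iff_mem_zpowers.mpr (hγ χ)
  have hk : Odd k := Nat.not_even_iff_odd.mp fun h => hχ (h.isSquare_pow γ)
  simpa [apply_neg_one_eq_neg_one_of_isGenerator hF hγ, hk.neg_one_pow] using
    pow_apply_coe γ k (-1)

end FiniteField

end MulChar

section WellPoised

variable {G M : Type*} [CommGroup G] [DivisionCommMonoid M]

/-- With `g = (gaussSum · θ)`, the Gauss-sum factor of the summand of `hypF` at `x` for the
well-poised lower parameters `a 0 * (a j.succ)⁻¹`. -/
def wellPoisedWeight (g : G → M) {n : ℕ} (a : Fin (n + 1) → G) (x : G) : M :=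
  (∏ i, g (a i * x) / g (a i)) *
    (∏ j : Fin n, g (a 0 * (a j.succ)⁻¹ * x)⁻¹ / g (a 0 * (a j.succ)⁻¹)⁻¹) * g x⁻¹

theorem wellPoisedWeight_inv_mul (g : G → M) {n : ℕ} (a : Fin (n + 1) → G) (x : G) :
    wellPoisedWeight g a (a 0 * x)⁻¹ = wellPoisedWeight g a x := by
  have h0 : a 0 * (a 0 * x)⁻¹ = x⁻¹ := by simp
  have h1 (j : Fin n) : a j.succ * (a 0 * x)⁻¹ = (a 0 * (a j.succ)⁻¹ * x)⁻¹ := by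
    simp [mul_comm, mul_left_comm]
  have h2 (j : Fin n) : (a 0 * (a j.succ)⁻¹ * (a 0 * x)⁻¹)⁻¹ = a j.succ * x := by
    simp [mul_comm, mul_left_comm]
  unfold wellPoisedWeight
  rw [Fin.prod_univ_succ, Fin.prod_univ_succ (fun i => g (a i * x) / g (a i))]
  simp only [h0, h1, h2, inv_inv, div_eq_mul_inv, Finset.prod_mul_distrib]
  ac_rfl

end WellPoised

theorem hypF_well_poised_eq {F : Type*} [Field F] [Fintype F] (θ : AddChar F ℂ) {n : ℕ}
    (A : Fin (n + 1) → MulChar F ℂ) (x : F) :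
    hypF θ A (fun j : Fin n => A 0 * (A j.succ)⁻¹) x = (1 / ((Fintype.card F : ℂ) - 1)) *
      ∑ χ : MulChar F ℂ, wellPoisedWeight (gaussSum · θ) A χ * χ (-1) ^ (n + 1) * χ x :=
  rfl

theorem hypF_well_poised_eq_zero_of_not_isSquare_general {F : Type*} [Field F] [Fintype F]
    (θ : AddChar F ℂ) (n : ℕ) (A : Fin (n + 1) → MulChar F ℂ)
    (hA : ¬ IsSquare (A 0)) :
    hypF θ A (fun j : Fin n => A 0 * (A j.succ)⁻¹) ((-1 : F) ^ n) = 0 := by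
  have hA0 : A 0 (-1) = -1 := MulChar.apply_neg_one_eq_neg_one_of_not_isSquare hA
  have hsign (χ : MulChar F ℂ) : (A 0 * χ)⁻¹ (-1) = -χ (-1) := by
    rw [MulChar.inv_apply', inv_neg, inv_one, MulChar.mul_apply, hA0, neg_one_mul]
  let e : MulChar F ℂ ≃ MulChar F ℂ := (Equiv.mulLeft (A 0)).trans (Equiv.inv _)
  have he (χ : MulChar F ℂ) : e χ = (A 0 * χ)⁻¹ := rfl
  rw [hypF_well_poised_eq, Fintype.sum_eq_zero_of_comp_equiv_eq_neg e, mul_zero]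
  intro χ
  rw [mul_assoc, mul_assoc, MulChar.apply_neg_one_pow_succ_mul_apply_neg_one_pow,
    MulChar.apply_neg_one_pow_succ_mul_apply_neg_one_pow, he, wellPoisedWeight_inv_mul, hsign,
    mul_neg]

/-- A well-poised `ₙ₊₁Fₙ*(⋯ | (-1)ⁿ)` vanishes when the leading parameter is not a square. -/
theorem hypF_well_poised_eq_zero_of_not_isSquare {F : Type*} [Field F] [Fintype F]
    (θ : AddChar F ℂ) (hθ : θ ≠ 1) (n : ℕ) (A : Fin (n + 1) → MulChar F ℂ)
    (hA : ¬ IsSquare (A 0)) :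
    hypF θ A (fun j : Fin n => A 0 * (A j.succ)⁻¹) ((-1 : F) ^ n) = 0 :=
  hypF_well_poised_eq_zero_of_not_isSquare_general θ n A hA
end
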